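/- There is an isomorphism of differential Gerstenhaber algebras Υ : dG(g, J) → dG(g, Ω) between the complex-structure DGA of the Kodaira surface and the symplectic DGA, given on generators by T ↦ γ, W ↦ -Δ β', ρ̄ ↦ δ, -(i/2)ω̄ ↦ α'; i.e. Υ is an isomorphism of exterior algebras intertwining the differentials (∂̄ ↦ d) and the brackets. -/

import Mathlib

noncomputable section

/-- A (differential) Gerstenhaber algebra structure on a `ℂ`-algebra `F` whose
multiplication plays the role of the wedge product. -/
structure GA (F : Type*) [Ring F] [Algebra ℂ F] where
  gr : ℕ → Submodule ℂ F
  br : F →ₗ[ℂ] F →ₗ[ℂ] F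
  D : F →ₗ[ℂ] F
  one_mem : (1 : F) ∈ gr 0
  mul_mem : ∀ {i j : ℕ} {a b : F}, a ∈ gr i → b ∈ gr j → a * b ∈ gr (i + j)
  br_mem : ∀ {i j : ℕ} {a b : F}, a ∈ gr i → b ∈ gr j → br a b ∈ gr (i + j - 1)
  D_mem : ∀ {i : ℕ} {a : F}, a ∈ gr i → D a ∈ gr (i + 1)
  gcomm : ∀ {i j : ℕ} {a b : F}, a ∈ gr i → b ∈ gr j →
    a * b = ((-1 : ℂ) ^ (i * j)) • (b * a)
  br_symm : ∀ {i j : ℕ} {a b : F}, a ∈ gr i → b ∈ gr j →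
    br a b = ((-1 : ℂ) ^ (i * j + i + j)) • br b a
  leibniz : ∀ {i j : ℕ} {a b : F} (c : F), a ∈ gr i → b ∈ gr j →
    br (a * b) c = a * br b c + ((-1 : ℂ) ^ (i * j)) • (b * br a c)
  leibniz' : ∀ {i j : ℕ} {a b : F} (c : F), a ∈ gr i → b ∈ gr j →
    br a (b * c) = br a b * c + ((-1 : ℂ) ^ (j + i * j)) • (b * br a c)
  D_mul : ∀ {i : ℕ} {a : F} (b : F), a ∈ gr i →
    D (a * b) = D a * b + ((-1 : ℂ) ^ i) • (a * D b)
  D_D : ∀ a : F, D (D a) = 0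
  D_br : ∀ {i : ℕ} {a : F} (b : F), a ∈ gr i →
    D (br a b) = br (D a) b - ((-1 : ℂ) ^ i) • br a (D b)

/-- The exterior algebra on four degree-one generators. -/
abbrev Lam : Type := ExteriorAlgebra ℂ (Fin 4 → ℂ)

/-- The four degree-one generators. -/
def gen (k : Fin 4) : Lam := ExteriorAlgebra.ι ℂ (Pi.single k (1 : ℂ))

/-- The canonical grading of the exterior algebra. -/
def grE (i : ℕ) : Submodule ℂ Lam :=
  (LinearMap.range (ExteriorAlgebra.ι ℂ : (Fin 4 → ℂ) →ₗ[ℂ] Lam)) ^ i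

/-!
`Υ` is the algebra automorphism of the exterior algebra induced by the linear automorphism of the
generating space prescribed on generators (invertible since `Δ ≠ 0`). Since `D` is a derivation of
degree one, and the bracket kills constants and obeys the odd Leibniz rule in each slot, an algebra
map preserving degrees that intertwines `D` and the brackets on generators intertwines them
everywhere: induct on words, first with a generator in the second slot of the bracket, then with a
homogeneous element in the first. On generators this is a finite check against the two structure
tables, whose missing entries come from the antisymmetry of the bracket in degree one.
-/

open ExteriorAlgebra

namespace GA

variable {F : Type*} [Ring F] [Algebra ℂ F] (G : GA F)

theorem D_one : G.D 1 = 0 := by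
  simpa using G.D_mul 1 G.one_mem

theorem br_one_left (c : F) : G.br 1 c = 0 := by
  simpa using G.leibniz c G.one_mem G.one_mem

theorem br_one_right {i : ℕ} {a : F} (ha : a ∈ G.gr i) : G.br a 1 = 0 := by
  rw [G.br_symm ha G.one_mem, br_one_left, smul_zero]

theorem br_anticomm {a b : F} (ha : a ∈ G.gr 1) (hb : b ∈ G.gr 1) : G.br a b = -G.br b a := by
  rw [G.br_symm ha hb]; norm_num

end GA

namespace ExteriorAlgebra

variable {R M N : Type*} [CommRing R] [AddCommGroup M] [Module R M] [AddCommGroup N] [Module R N]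

theorem ι_mem_exteriorPower_one (m : M) : ι R m ∈ ⋀[R]^1 M := by
  rw [exteriorPower, pow_one]; exact LinearMap.mem_range_self _ _

theorem map_mem_exteriorPower (f : M →ₗ[R] N) {n : ℕ} {x : ExteriorAlgebra R M}
    (hx : x ∈ ⋀[R]^n M) : map f x ∈ ⋀[R]^n N := by
  have hle : (⋀[R]^n M).map (map f).toLinearMap ≤ ⋀[R]^n N := by
    rw [exteriorPower, Submodule.map_pow, ι_range_map_map]
    exact pow_le_pow_left' LinearMap.map_le_range n
  exact hle ⟨x, hx, rfl⟩

def congr (e : M ≃ₗ[R] N) : ExteriorAlgebra R M ≃ₐ[R] ExteriorAlgebra R N :=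
  AlgEquiv.ofAlgHom (map e) (map e.symm) (by simp) (by simp)

@[simp]
theorem congr_apply_ι (e : M ≃ₗ[R] N) (m : M) : congr e (ι R m) = ι R (e m) :=
  map_apply_ι _ m

end ExteriorAlgebra

namespace GA

variable {M N : Type*} [AddCommGroup M] [Module ℂ M] [AddCommGroup N] [Module ℂ N]
  {G₁ : GA (ExteriorAlgebra ℂ M)} {G₂ : GA (ExteriorAlgebra ℂ N)}
  {Φ : ExteriorAlgebra ℂ M →ₐ[ℂ] ExteriorAlgebra ℂ N}

theorem map_D_eq {κ : Type*} (h₁ : ⋀[ℂ]^1 M ≤ G₁.gr 1) (h₂ : ⋀[ℂ]^1 N ≤ G₂.gr 1)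
    (hΦ : ∀ m, Φ (ι ℂ m) ∈ ⋀[ℂ]^1 N) (b : Module.Basis κ ℂ M)
    (hb : ∀ k, Φ (G₁.D (ι ℂ (b k))) = G₂.D (Φ (ι ℂ (b k))))
    (x : ExteriorAlgebra ℂ M) : Φ (G₁.D x) = G₂.D (Φ x) := by
  have hι (m : M) : Φ (G₁.D (ι ℂ m)) = G₂.D (Φ (ι ℂ m)) :=
    LinearMap.congr_fun (b.ext (f₁ := Φ.toLinearMap ∘ₗ G₁.D ∘ₗ ι ℂ)
      (f₂ := G₂.D ∘ₗ Φ.toLinearMap ∘ₗ ι ℂ) hb) m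
  induction x using CliffordAlgebra.left_induction with
  | algebraMap r => simp [Algebra.algebraMap_eq_smul_one, G₁.D_one, G₂.D_one]
  | add x y hx hy => simp only [map_add, hx, hy]
  | ι_mul x m hx =>
    rw [G₁.D_mul x (h₁ (ι_mem_exteriorPower_one m)), map_mul, G₂.D_mul _ (h₂ (hΦ m))]
    simp only [map_add, map_smul, map_mul, hι, hx]

theorem map_br_ι_right_of_mem (h₁ : ∀ i, ⋀[ℂ]^i M ≤ G₁.gr i) (h₂ : ∀ i, ⋀[ℂ]^i N ≤ G₂.gr i)
    (hΦ : ∀ {i x}, x ∈ ⋀[ℂ]^i M → Φ x ∈ ⋀[ℂ]^i N)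
    (hι : ∀ m m', Φ (G₁.br (ι ℂ m) (ι ℂ m')) = G₂.br (Φ (ι ℂ m)) (Φ (ι ℂ m')))
    (w : M) {j : ℕ} {x : ExteriorAlgebra ℂ M} (hx : x ∈ ⋀[ℂ]^j M) :
    Φ (G₁.br x (ι ℂ w)) = G₂.br (Φ x) (Φ (ι ℂ w)) := by
  induction hx using Submodule.pow_induction_on_left' with
  | algebraMap r => simp [Algebra.algebraMap_eq_smul_one, G₁.br_one_left, G₂.br_one_left]
  | add x y i _ _ hx hy => simp only [map_add, LinearMap.add_apply, hx, hy]
  | mem_mul m hm i x hx ih =>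
    obtain ⟨u, rfl⟩ := hm
    have hu := ι_mem_exteriorPower_one (R := ℂ) u
    rw [G₁.leibniz _ (h₁ 1 hu) (h₁ i hx), map_mul, G₂.leibniz _ (h₂ 1 (hΦ hu)) (h₂ i (hΦ hx))]
    simp only [map_add, map_smul, map_mul, hι, ih]

theorem map_br_of_mem (h₁ : ∀ i, ⋀[ℂ]^i M ≤ G₁.gr i) (h₂ : ∀ i, ⋀[ℂ]^i N ≤ G₂.gr i)
    (hΦ : ∀ {i x}, x ∈ ⋀[ℂ]^i M → Φ x ∈ ⋀[ℂ]^i N)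
    (hι : ∀ m m', Φ (G₁.br (ι ℂ m) (ι ℂ m')) = G₂.br (Φ (ι ℂ m)) (Φ (ι ℂ m')))
    {i : ℕ} {x : ExteriorAlgebra ℂ M} (hx : x ∈ ⋀[ℂ]^i M) (y : ExteriorAlgebra ℂ M) :
    Φ (G₁.br x y) = G₂.br (Φ x) (Φ y) := by
  induction y using CliffordAlgebra.left_induction with
  | algebraMap r =>
    simp [Algebra.algebraMap_eq_smul_one, G₁.br_one_right (h₁ i hx),
      G₂.br_one_right (h₂ i (hΦ hx))]
  | add y z hy hz => simp only [map_add, hy, hz]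
  | ι_mul y m hy =>
    have hm := ι_mem_exteriorPower_one (R := ℂ) m
    rw [G₁.leibniz' y (h₁ i hx) (h₁ 1 hm), map_mul, G₂.leibniz' _ (h₂ i (hΦ hx)) (h₂ 1 (hΦ hm))]
    simp only [map_add, map_smul, map_mul, hy, map_br_ι_right_of_mem h₁ h₂ hΦ hι m hx]

theorem map_br_eq {κ : Type*} (h₁ : ∀ i, ⋀[ℂ]^i M ≤ G₁.gr i) (h₂ : ∀ i, ⋀[ℂ]^i N ≤ G₂.gr i)
    (hΦ : ∀ {i x}, x ∈ ⋀[ℂ]^i M → Φ x ∈ ⋀[ℂ]^i N) (b : Module.Basis κ ℂ M)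
    (hb : ∀ k l, Φ (G₁.br (ι ℂ (b k)) (ι ℂ (b l))) = G₂.br (Φ (ι ℂ (b k))) (Φ (ι ℂ (b l))))
    (x y : ExteriorAlgebra ℂ M) : Φ (G₁.br x y) = G₂.br (Φ x) (Φ y) := by
  have hι (m m' : M) : Φ (G₁.br (ι ℂ m) (ι ℂ m')) = G₂.br (Φ (ι ℂ m)) (Φ (ι ℂ m')) :=
    LinearMap.congr_fun₂ (LinearMap.ext_basis b b
      (B := (G₁.br.compl₁₂ (ι ℂ) (ι ℂ)).compr₂ Φ.toLinearMap)
      (B' := G₂.br.compl₁₂ (Φ.toLinearMap ∘ₗ ι ℂ) (Φ.toLinearMap ∘ₗ ι ℂ)) hb) m m'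
  induction x using DirectSum.Decomposition.inductionOn fun i => ⋀[ℂ]^i M with
  | zero => simp
  | homogeneous x => exact map_br_of_mem h₁ h₂ hΦ hι x.2 y
  | add x x' hx hx' => simp only [map_add, LinearMap.add_apply, hx, hx']

end GA

theorem ι_basisFun_eq_gen (k : Fin 4) : ι ℂ (Pi.basisFun ℂ (Fin 4) k) = gen k := by
  rw [Pi.basisFun_apply]; rfl

theorem neg_I_div_two_mul_two_I : -Complex.I / 2 * (2 * Complex.I) = 1 := by
  linear_combination (-1 : ℂ) * Complex.I_sq

open Complex in
/-- Coordinates are `(T, W, ρ̄, ω̄)` on the source and `(α', β', γ, δ)` on the target;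
`ω̄ ↦ 2i α'` makes `-(i/2) ω̄ ↦ α'`. -/
def kodairaSymplecticEquiv (Δ : ℂ) (hΔ : Δ ≠ 0) : (Fin 4 → ℂ) ≃ₗ[ℂ] (Fin 4 → ℂ) where
  toFun m := ![2 * I * m 3, -Δ * m 1, m 0, m 2]
  invFun m := ![m 2, -(m 1 / Δ), m 3, m 0 / (2 * I)]
  map_add' m n := by ext i; fin_cases i <;> simp <;> ring
  map_smul' c m := by ext i; fin_cases i <;> simp <;> ring
  left_inv m := by ext i; fin_cases i <;> simp [hΔ, neg_div, mul_div_cancel_left₀]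
  right_inv m := by ext i; fin_cases i <;> simp [hΔ, mul_div_cancel₀]

def kodairaSymplecticIso (Δ : ℂ) (hΔ : Δ ≠ 0) : Lam ≃ₐ[ℂ] Lam :=
  ExteriorAlgebra.congr (kodairaSymplecticEquiv Δ hΔ)

section kodairaSymplecticIso

variable (Δ : ℂ) (hΔ : Δ ≠ 0)

@[simp]
theorem kodairaSymplecticIso_gen_zero : kodairaSymplecticIso Δ hΔ (gen 0) = gen 2 := by
  simp only [kodairaSymplecticIso, gen, congr_apply_ι]; congr 1
  ext i; fin_cases i <;> simp [kodairaSymplecticEquiv]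

@[simp]
theorem kodairaSymplecticIso_gen_one : kodairaSymplecticIso Δ hΔ (gen 1) = (-Δ) • gen 1 := by
  simp only [kodairaSymplecticIso, gen, congr_apply_ι]; rw [← map_smul]; congr 1
  ext i; fin_cases i <;> simp [kodairaSymplecticEquiv]

@[simp]
theorem kodairaSymplecticIso_gen_two : kodairaSymplecticIso Δ hΔ (gen 2) = gen 3 := by
  simp only [kodairaSymplecticIso, gen, congr_apply_ι]; congr 1
  ext i; fin_cases i <;> simp [kodairaSymplecticEquiv]

@[simp]
theorem kodairaSymplecticIso_gen_three :
    kodairaSymplecticIso Δ hΔ (gen 3) = (2 * Complex.I) • gen 0 := by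
  simp only [kodairaSymplecticIso, gen, congr_apply_ι]; rw [← map_smul]; congr 1
  ext i; fin_cases i <;> simp [kodairaSymplecticEquiv]

end kodairaSymplecticIso

theorem stmt19_general
    (G1 G2 : GA Lam)
    (hgr1 : G1.gr = grE) (hgr2 : G2.gr = grE)
    (T W ρ ω : Lam)
    (hT : T = gen 0) (hW : W = gen 1) (hρ : ρ = gen 2) (hω : ω = gen 3)
    -- generating data for the complex-structure DGA
    (h1Tρ : G1.br T ρ = (-(Complex.I)/2) • ω)
    (h1TT : G1.br T T = 0) (h1TW : G1.br T W = 0) (h1Tω : G1.br T ω = 0)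
    (h1WW : G1.br W W = 0) (h1Wρ : G1.br W ρ = 0) (h1Wω : G1.br W ω = 0)
    (h1ρρ : G1.br ρ ρ = 0) (h1ρω : G1.br ρ ω = 0) (h1ωω : G1.br ω ω = 0)
    (h1DT : G1.D T = (-(Complex.I)/2) • (ω * W))
    (h1DW : G1.D W = 0) (h1Dρ : G1.D ρ = 0) (h1Dω : G1.D ω = 0)
    (Δ : ℂ) (hΔ : Δ ≠ 0)
    (α' β' γ δ : Lam)
    (hα' : α' = gen 0) (hβ' : β' = gen 1) (hγ : γ = gen 2) (hδ : δ = gen 3)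
    -- generating data for the symplectic DGA
    (h2γδ : G2.br γ δ = α')
    (h2αα : G2.br α' α' = 0) (h2αβ : G2.br α' β' = 0) (h2αγ : G2.br α' γ = 0)
    (h2αδ : G2.br α' δ = 0) (h2ββ : G2.br β' β' = 0) (h2βγ : G2.br β' γ = 0)
    (h2βδ : G2.br β' δ = 0) (h2γγ : G2.br γ γ = 0) (h2δδ : G2.br δ δ = 0)
    (h2Dγ : G2.D γ = -(Δ • (α' * β')))
    (h2Dα : G2.D α' = 0) (h2Dβ : G2.D β' = 0) (h2Dδ : G2.D δ = 0) :
    ∃ Υ : Lam ≃ₐ[ℂ] Lam,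
      Υ T = γ ∧ Υ W = (-Δ) • β' ∧ Υ ρ = δ ∧ Υ ((-(Complex.I)/2) • ω) = α' ∧
      (∀ x : Lam, Υ (G1.D x) = G2.D (Υ x)) ∧
      (∀ x y : Lam, Υ (G1.br x y) = G2.br (Υ x) (Υ y)) := by
  subst hT hW hρ hω hα' hβ' hγ hδ
  have deg₁ : ∀ i, ⋀[ℂ]^i (Fin 4 → ℂ) ≤ G1.gr i := fun i => hgr1 ▸ le_rfl
  have deg₂ : ∀ i, ⋀[ℂ]^i (Fin 4 → ℂ) ≤ G2.gr i := fun i => hgr2 ▸ le_rfl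
  have anti₁ (k l : Fin 4) : G1.br (gen k) (gen l) = -G1.br (gen l) (gen k) :=
    G1.br_anticomm (deg₁ 1 (ι_mem_exteriorPower_one _)) (deg₁ 1 (ι_mem_exteriorPower_one _))
  have anti₂ (k l : Fin 4) : G2.br (gen k) (gen l) = -G2.br (gen l) (gen k) :=
    G2.br_anticomm (deg₂ 1 (ι_mem_exteriorPower_one _)) (deg₂ 1 (ι_mem_exteriorPower_one _))
  set Υ := kodairaSymplecticIso Δ hΔ
  have hΥ {i : ℕ} {x : Lam} (hx : x ∈ ⋀[ℂ]^i (Fin 4 → ℂ)) : Υ.toAlgHom x ∈ ⋀[ℂ]^i (Fin 4 → ℂ) :=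
    map_mem_exteriorPower _ hx
  refine ⟨Υ, by simp [Υ], by simp [Υ], by simp [Υ], ?_,
    GA.map_D_eq (deg₁ 1) (deg₂ 1) (fun m => hΥ (ι_mem_exteriorPower_one m))
      (Pi.basisFun ℂ (Fin 4)) fun k => ?_,
    GA.map_br_eq deg₁ deg₂ hΥ (Pi.basisFun ℂ (Fin 4)) fun k l => ?_⟩
  · simp [Υ, smul_smul, neg_I_div_two_mul_two_I]
  · rw [ι_basisFun_eq_gen]
    fin_cases k <;> simp [Υ, h1DT, h1DW, h1Dρ, h1Dω, h2Dγ, h2Dα, h2Dβ, h2Dδ, smul_smul]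
    congr 1
    linear_combination (-Δ) * Complex.I_sq
  · rw [ι_basisFun_eq_gen, ι_basisFun_eq_gen]
    fin_cases k <;> fin_cases l <;>
      simp [Υ, smul_smul, neg_I_div_two_mul_two_I,
        h1Tρ, h1TT, h1TW, h1Tω, h1WW, h1Wρ, h1Wω, h1ρρ, h1ρω, h1ωω,
        anti₁ 1 0, anti₁ 2 0, anti₁ 3 0, anti₁ 2 1, anti₁ 3 1, anti₁ 3 2,
        h2γδ, h2αα, h2αβ, h2αγ, h2αδ, h2ββ, h2βγ, h2βδ, h2γγ, h2δδ,
        anti₂ 1 0, anti₂ 2 0, anti₂ 3 0, anti₂ 2 1, anti₂ 3 1, anti₂ 3 2]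

/-- There is an isomorphism `Υ : dG(g, J) → dG(g, Ω)` of differential Gerstenhaber
algebras between the complex-structure DGA of the Kodaira surface (exterior algebra
on `T, W, ρ̄, ω̄` with `[T,ρ̄] = -(i/2)ω̄` and `∂̄T = -(i/2)ω̄∧W`) and the symplectic
DGA (exterior algebra on `α', β', γ, δ` with `[γ,δ] = α'` and `dγ = -Δ α'∧β'`,
`Δ = u₁²+v₁²-u₂²-v₂² ≠ 0`), given on generators by `T ↦ γ`, `W ↦ -Δβ'`, `ρ̄ ↦ δ`,
`-(i/2)ω̄ ↦ α'`, intertwining the differentials and the brackets. -/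
theorem stmt19
    (G1 G2 : GA Lam)
    (hgr1 : G1.gr = grE) (hgr2 : G2.gr = grE)
    (T W ρ ω : Lam)
    (hT : T = gen 0) (hW : W = gen 1) (hρ : ρ = gen 2) (hω : ω = gen 3)
    -- generating data for the complex-structure DGA
    (h1Tρ : G1.br T ρ = (-(Complex.I)/2) • ω)
    (h1TT : G1.br T T = 0) (h1TW : G1.br T W = 0) (h1Tω : G1.br T ω = 0)
    (h1WW : G1.br W W = 0) (h1Wρ : G1.br W ρ = 0) (h1Wω : G1.br W ω = 0)
    (h1ρρ : G1.br ρ ρ = 0) (h1ρω : G1.br ρ ω = 0) (h1ωω : G1.br ω ω = 0)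
    (h1DT : G1.D T = (-(Complex.I)/2) • (ω * W))
    (h1DW : G1.D W = 0) (h1Dρ : G1.D ρ = 0) (h1Dω : G1.D ω = 0)
    (u1 v1 u2 v2 : ℝ) (Δ : ℂ)
    (hΔdef : Δ = ((u1 ^ 2 + v1 ^ 2 - u2 ^ 2 - v2 ^ 2 : ℝ) : ℂ)) (hΔ : Δ ≠ 0)
    (α' β' γ δ : Lam)
    (hα' : α' = gen 0) (hβ' : β' = gen 1) (hγ : γ = gen 2) (hδ : δ = gen 3)
    -- generating data for the symplectic DGA
    (h2γδ : G2.br γ δ = α')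
    (h2αα : G2.br α' α' = 0) (h2αβ : G2.br α' β' = 0) (h2αγ : G2.br α' γ = 0)
    (h2αδ : G2.br α' δ = 0) (h2ββ : G2.br β' β' = 0) (h2βγ : G2.br β' γ = 0)
    (h2βδ : G2.br β' δ = 0) (h2γγ : G2.br γ γ = 0) (h2δδ : G2.br δ δ = 0)
    (h2Dγ : G2.D γ = -(Δ • (α' * β')))
    (h2Dα : G2.D α' = 0) (h2Dβ : G2.D β' = 0) (h2Dδ : G2.D δ = 0) :
    ∃ Υ : Lam ≃ₐ[ℂ] Lam,
      Υ T = γ ∧ Υ W = (-Δ) • β' ∧ Υ ρ = δ ∧ Υ ((-(Complex.I)/2) • ω) = α' ∧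
      (∀ x : Lam, Υ (G1.D x) = G2.D (Υ x)) ∧
      (∀ x y : Lam, Υ (G1.br x y) = G2.br (Υ x) (Υ y)) :=
  stmt19_general G1 G2 hgr1 hgr2 T W ρ ω hT hW hρ hω h1Tρ h1TT h1TW h1Tω h1WW h1Wρ h1Wω h1ρρ h1ρω
    h1ωω h1DT h1DW h1Dρ h1Dω Δ hΔ α' β' γ δ hα' hβ' hγ hδ h2γδ h2αα h2αβ h2αγ h2αδ h2ββ h2βγ h2βδ
    h2γγ h2δδ h2Dγ h2Dα h2Dβ h2Dδ
end
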